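/- arXiv:math/0410208 — 7 statements merged into one kernel-verified Lean document; each statement's English description precedes it below -/
import Mathlib

section
/- Let α = (i/8)·Σ_{j=0}^n a_j (z_j dz̄_j − z̄_j dz_j) restricted to the Brieskorn manifold Σ(a_0,…,a_n) = S^{2n+1} ∩ f^{-1}(0), f(z) = Σ z_j^{a_j}. Then the vector field R = 4i(z_0/a_0, …, z_n/a_n) is tangent to Σ(a_0,…,a_n), satisfies α(R) = 1, and ι_R dα = 0; hence R is the Reeb vector field of α. -/
open Complex ComplexConjugate

/-! Writing `R_j = 4i z_j / a_j`, each coordinate of `R` is a real multiple of `i z_j`: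
`z̄_j R_j = 4i |z_j|² / a_j` is purely imaginary, so `R` is tangent to the sphere and
`α(R) = Σ |z_j|² = 1`; `a_j z_j^(a_j - 1) R_j = 4i z_j^(a_j)`, so `df(R) = 4i f(z) = 0`; and
`a_j Im(R̄_j v_j) = -4 Re(z̄_j v_j)`, so `dα(R, v) = -2 Re⟨z, v⟩` vanishes on the tangent
space of the sphere. -/

section

variable {ι : Type*} [Fintype ι] (a : ι → ℕ) (z : ι → ℂ)

theorem conj_mul_four_I_mul_div (w : ℂ) (k : ℕ) :
    conj w * (4 * I * w / k) = ((4 * ‖w‖ ^ 2 / k : ℝ) : ℂ) * I := by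
  push_cast
  linear_combination (4 * I / k) * conj_mul' w

theorem natCast_mul_im_conj_mul_four_I_mul_div (w v : ℂ) {k : ℕ} (hk : k ≠ 0) :
    (k : ℝ) * (conj (4 * I * w / k) * v).im = -4 * (conj w * v).re := by
  have hk' : (k : ℂ) ≠ 0 := Nat.cast_ne_zero.2 hk
  have : conj (4 * I * w / k) * v = ((-4 / k : ℝ) : ℂ) * I * (conj w * v) := by
    simp only [map_div₀, map_mul, conj_I, map_ofNat, map_natCast]
    push_cast
    ring
  rw [this, mul_assoc, im_ofReal_mul, I_mul_im]
  field_simp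

theorem re_sum_conj_mul_reeb : (∑ j, conj (z j) * (4 * I * z j / a j)).re = 0 := by
  simp only [conj_mul_four_I_mul_div, re_sum, re_ofReal_mul, I_re, mul_zero,
    Finset.sum_const_zero]

variable {a}

theorem sum_natCast_mul_pow_pred_mul_reeb (ha : ∀ j, 0 < a j) :
    ∑ j, (a j : ℂ) * z j ^ (a j - 1) * (4 * I * z j / a j) = 4 * I * ∑ j, z j ^ a j := by
  rw [Finset.mul_sum]
  refine Finset.sum_congr rfl fun j _ => ?_
  have hj : (a j : ℂ) ≠ 0 := Nat.cast_ne_zero.2 (ha j).ne'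
  have hpow : z j ^ (a j - 1) * z j = z j ^ a j := by rw [← pow_succ, Nat.sub_add_cancel (ha j)]
  rw [← hpow]
  field_simp

theorem contactForm_reeb (ha : ∀ j, 0 < a j) :
    (1 / 4) * ∑ j, (a j : ℝ) * (conj (z j) * (4 * I * z j / a j)).im = ∑ j, ‖z j‖ ^ 2 := by
  rw [Finset.mul_sum]
  refine Finset.sum_congr rfl fun j _ => ?_
  have hj : (a j : ℝ) ≠ 0 := Nat.cast_ne_zero.2 (ha j).ne'
  rw [conj_mul_four_I_mul_div, im_ofReal_mul, I_im]
  field_simp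

theorem contactForm_deriv_reeb (ha : ∀ j, 0 < a j) (v : ι → ℂ) :
    (1 / 2) * ∑ j, (a j : ℝ) * (conj (4 * I * z j / a j) * v j).im
      = -2 * (∑ j, conj (z j) * v j).re := by
  simp only [natCast_mul_im_conj_mul_four_I_mul_div _ _ (ha _).ne', re_sum, ← Finset.mul_sum]
  ring

end

/-- On the Brieskorn manifold `Σ(a_0,…,a_n) = S^{2n+1} ∩ f⁻¹(0)`, the vector field
`R = 4i(z_0/a_0,…,z_n/a_n)` is tangent to both the sphere and `f⁻¹(0)`, satisfies
`α(R) = 1` for `α = (i/8)·Σ a_j (z_j dz̄_j − z̄_j dz_j)` (whose value on a tangent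
vector `v` is `(1/4)·Σ a_j Im(z̄_j v_j)`), and contracts to zero in
`dα = (i/4)·Σ a_j dz_j ∧ dz̄_j` (whose value on `(u,v)` is `(1/2)·Σ a_j Im(ū_j v_j)`).
Hence `R` is the Reeb vector field of `α`. -/
theorem stmt1 (n : ℕ) (a : Fin (n + 1) → ℕ) (ha : ∀ j, 0 < a j)
    (z : Fin (n + 1) → ℂ)
    (hsphere : ∑ j, ‖z j‖ ^ 2 = 1)
    (hf : ∑ j, z j ^ a j = 0) :
    let R : Fin (n + 1) → ℂ := fun j => 4 * Complex.I * z j / (a j : ℂ)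
    let alpha : (Fin (n + 1) → ℂ) → ℝ :=
      fun v => (1 / 4) * ∑ j, (a j : ℝ) * ((starRingEnd ℂ) (z j) * v j).im
    let dalpha : (Fin (n + 1) → ℂ) → (Fin (n + 1) → ℂ) → ℝ :=
      fun u v => (1 / 2) * ∑ j, (a j : ℝ) * ((starRingEnd ℂ) (u j) * v j).im
    -- R is tangent to the sphere at z:
    ((∑ j, (starRingEnd ℂ) (z j) * R j).re = 0) ∧
    -- R is tangent to f⁻¹(0) at z (kernel of df):
    (∑ j, (a j : ℂ) * z j ^ (a j - 1) * R j = 0) ∧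
    -- α(R) = 1:
    alpha R = 1 ∧
    -- ι_R dα = 0 on the tangent space of Σ(a_0,…,a_n) at z:
    (∀ v : Fin (n + 1) → ℂ,
      (∑ j, (starRingEnd ℂ) (z j) * v j).re = 0 →
      (∑ j, (a j : ℂ) * z j ^ (a j - 1) * v j = 0) →
      dalpha R v = 0) := by
  intro R alpha dalpha
  refine ⟨re_sum_conj_mul_reeb a z, ?_, ?_, fun v hv _ => ?_⟩
  · exact (sum_natCast_mul_pow_pred_mul_reeb z ha).trans (by rw [hf, mul_zero])
  · exact (contactForm_reeb z ha).trans hsphere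
  · exact (contactForm_deriv_reeb z ha v).trans (by rw [hv, mul_zero])
end

section
/- With T_i = (π/2)·lcm_{j ∈ J_{T_i}} a_j the minimal return time of an orbit type and s_i = (π·lcm_{j∈I} a_j)/(2T_i), the Maslov index formula μ(S_{NT_i}) = 2Σ_{j∈J_{T_i}} 2NT_i/(πa_j) + 2Σ_{j∈I∖J_{T_i}} ⌊2NT_i/(πa_j)⌋ + #(I∖J_{T_i}) − 4NT_i/π satisfies the periodicity relation μ(S_{(N+s_i)T_i}) = μ(S_{NT_i}) + 2·lcm_{j∈I}(a_j)·(Σ_{j=0}^n 1/a_j − 1) for all N ≥ 1. -/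
open Real

/-- Periodicity of the Maslov index of Brieskorn orbit spaces: with
`T_i = (π/2)·lcm_{j∈J} a_j` and `s_i = (π·lcm_I a)/(2T_i) = lcm_I a / lcm_J a`,
one has `μ(S_{(N+s_i)T_i}) = μ(S_{NT_i}) + 2·lcm_I(a)·(Σ_j 1/a_j − 1)`. -/
theorem stmt5 (n : ℕ) (a : Fin (n + 1) → ℕ) (ha : ∀ j, 0 < a j)
    (J : Finset (Fin (n + 1))) (hJ : J.Nonempty) :
    let L : ℕ := Finset.univ.lcm a
    let T : ℝ := π / 2 * (J.lcm a : ℕ)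
    let s : ℕ := L / J.lcm a
    let μ : ℕ → ℝ := fun N =>
      2 * ∑ j ∈ J, 2 * N * T / (π * a j)
      + 2 * ∑ j ∈ Jᶜ, (⌊2 * N * T / (π * a j)⌋ : ℝ)
      + (Jᶜ.card : ℝ) - 4 * N * T / π
    ∀ N : ℕ, 1 ≤ N →
      μ (N + s) = μ N + 2 * (L : ℝ) * ((∑ j, (1 : ℝ) / a j) - 1) := by
  intro L T s μ N hN
  have hπ : (π:ℝ) ≠ 0 := Real.pi_ne_zero
  have haj : ∀ j, (a j : ℝ) ≠ 0 := fun j => Nat.cast_ne_zero.mpr (ha j).ne'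
  have hdvdj : ∀ j, a j ∣ L := fun j => Finset.dvd_lcm (Finset.mem_univ j)
  have hdvd : J.lcm a ∣ L := Finset.lcm_dvd fun b _ => hdvdj b
  have hsL : s * J.lcm a = L := Nat.div_mul_cancel hdvd
  have hterm : ∀ (x : ℕ) (j : Fin (n+1)), 2 * (x:ℝ) * T / (π * a j)
      = ((x * J.lcm a : ℕ) : ℝ) / (a j) := by
    intro x j
    show 2 * (x:ℝ) * (π / 2 * (J.lcm a : ℕ)) / (π * a j) = _
    push_cast
    rw [show 2 * (x:ℝ) * (π / 2 * (J.lcm a : ℕ)) = π * ((x:ℝ) * (J.lcm a : ℕ)) by ring,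
      mul_div_mul_left _ _ hπ]
  have hterm2 : ∀ (x : ℕ), 4 * (x:ℝ) * T / π = 2 * ((x * J.lcm a : ℕ) : ℝ) := by
    intro x
    show 4 * (x:ℝ) * (π / 2 * (J.lcm a : ℕ)) / π = _
    push_cast
    rw [show 4 * (x:ℝ) * (π / 2 * (J.lcm a : ℕ)) = 2 * ((x:ℝ) * (J.lcm a : ℕ)) * π by ring,
      mul_div_cancel_right₀ _ hπ]
  have hNs : (N + s) * J.lcm a = N * J.lcm a + L := by
    rw [add_mul, hsL]
  have hLdiv : ∀ j, (L:ℝ)/(a j) = ((L / a j : ℕ) : ℝ) := fun j =>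
    (Nat.cast_div (hdvdj j) (haj j)).symm
  have hfloor : ∀ j, (⌊(((N + s) * J.lcm a : ℕ) : ℝ) / (a j : ℝ)⌋ : ℝ)
      = (⌊((N * J.lcm a : ℕ) : ℝ) / a j⌋ : ℝ) + ((L / a j : ℕ) : ℝ) := by
    intro j
    rw [hNs]
    push_cast
    rw [add_div, hLdiv j, (Int.cast_natCast (L / a j)).symm, Int.floor_add_intCast]
    push_cast; ring
  have hsplit : ∀ j, (((N + s) * J.lcm a : ℕ) : ℝ) / (a j : ℝ)
      = ((N * J.lcm a : ℕ) : ℝ) / a j + (L:ℝ) / a j := by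
    intro j
    rw [hNs]; push_cast; rw [add_div]
  simp only [μ, hterm, hterm2, hfloor]
  simp only [hsplit]
  rw [Finset.sum_add_distrib, Finset.sum_add_distrib]
  have hsum : (∑ j ∈ J, (L:ℝ)/a j) + ∑ j ∈ Jᶜ, ((L / a j : ℕ) : ℝ)
      = (L:ℝ) * ∑ j, (1:ℝ) / a j := by
    rw [Finset.mul_sum]
    rw [← Finset.sum_add_sum_compl J (fun j => (L:ℝ) * (1 / a j))]
    congr 1
    · exact Finset.sum_congr rfl fun j _ => by rw [mul_one_div]
    · exact Finset.sum_congr rfl fun j _ => by rw [mul_one_div, hLdiv j]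
  push_cast [hNs]
  linarith [hsum]
end

section
/- Let p_1,…,p_{n−1} be odd primes and consider Σ(p_1,…,p_{n−1},2,2). For the orbit type J = {n−1, n} (the two exponents equal to 2) with minimal return time T = π, the Maslov index satisfies μ(S_{NT}) = 2·Σ_{i=1}^{n−1} ⌊2N/p_i⌋ + (n−1) for all N ≥ 1; in particular μ(S_{NT}) ≥ n − 1, with equality when 2N < min_i p_i. -/
open Real

/-- For `Σ(p_1,…,p_{n−1},2,2)` with odd primes `p_i`, the orbit type `J = {n−1,n}` (the two
exponents equal to 2) with minimal return time `T = π` has Maslov index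
`μ(S_{NT}) = 2·Σ_{i=1}^{n−1} ⌊2N/p_i⌋ + (n−1)`; in particular `μ(S_{NT}) ≥ n−1`, with
equality when `2N < min_i p_i`.  Here `μ` is the general formula
`2Σ_{j∈J} 2NT/(πa_j) + 2Σ_{j∉J} ⌊2NT/(πa_j)⌋ + #(I∖J) − 4NT/π`. -/
theorem stmt10 (n : ℕ) (hn : 3 ≤ n) (p : Fin (n - 1) → ℕ)
    (hp : ∀ i, Nat.Prime (p i) ∧ Odd (p i)) :
    let μ : ℕ → ℝ := fun N =>
      2 * (2 * (2 * N * π / (π * 2)))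
      + 2 * ∑ i, (⌊2 * N * π / (π * p i)⌋ : ℝ)
      + ((n : ℝ) - 1) - 4 * N * π / π
    (∀ N : ℕ, 1 ≤ N →
      μ N = 2 * ∑ i, (⌊(2 * N : ℝ) / p i⌋ : ℝ) + ((n : ℝ) - 1)) ∧
    (∀ N : ℕ, 1 ≤ N → μ N ≥ (n : ℝ) - 1) ∧
    (∀ N : ℕ, 1 ≤ N → (∀ i, 2 * N < p i) → μ N = (n : ℝ) - 1) := by
  intro μ
  have hπ : (π : ℝ) ≠ 0 := Real.pi_ne_zero
  have harg : ∀ (N : ℕ) (i : Fin (n - 1)),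
      2 * (N : ℝ) * π / (π * p i) = (2 * N : ℝ) / p i := by
    intro N i
    rw [show 2 * (N : ℝ) * π = π * (2 * N) by ring, mul_div_mul_left _ _ hπ]
  have hmain : ∀ N : ℕ,
      μ N = 2 * ∑ i, (⌊(2 * N : ℝ) / p i⌋ : ℝ) + ((n : ℝ) - 1) := by
    intro N
    have h1 : 2 * ((N : ℝ)) * π / (π * 2) = N := by field_simp
    have h2 : 4 * (N : ℝ) * π / π = 4 * N := by field_simp
    simp only [μ, h1, h2]
    rw [show (∑ i, (⌊2 * (N : ℝ) * π / (π * p i)⌋ : ℝ))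
        = ∑ i, (⌊(2 * N : ℝ) / p i⌋ : ℝ) from
      Finset.sum_congr rfl (fun i _ => by rw [harg N i])]
    ring
  refine ⟨fun N _ => hmain N, ?_, ?_⟩
  · intro N _
    rw [hmain N]
    have : (0 : ℝ) ≤ ∑ i, (⌊(2 * N : ℝ) / p i⌋ : ℝ) := by
      apply Finset.sum_nonneg
      intro i _
      have : (0 : ℝ) ≤ (2 * N : ℝ) / p i := by positivity
      exact_mod_cast Int.floor_nonneg.2 this
    linarith
  · intro N _ hN
    rw [hmain N]
    have : ∀ i : Fin (n - 1), (⌊(2 * N : ℝ) / p i⌋ : ℝ) = 0 := by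
      intro i
      have hpi : 0 < (p i : ℝ) := by
        exact_mod_cast (hp i).1.pos
      have h0 : (0 : ℝ) ≤ (2 * N : ℝ) / p i := by positivity
      have h1 : (2 * N : ℝ) / p i < 1 := by
        rw [div_lt_one hpi]
        exact_mod_cast hN i
      rw [Int.floor_eq_zero_iff.2 ⟨h0, h1⟩]
      simp
    rw [Finset.sum_congr rfl (fun i _ => this i)]
    simp
end

section
/- Let p_1,…,p_{n−1} be odd primes, and consider an orbit type J = {i_1,…,i_k} ⊆ {1,…,n−1} with k ≥ 2 among the prime exponents of Σ(p_1,…,p_{n−1},2,2), with return time T = (π/2)·p_{i_1}⋯p_{i_k}. Then for all N ≥ 1 the degree 'μ(S_{NT}) − (1/2)dim S_{NT} + (n−3)' (with dim S_{NT} = 2k − 4) is at least 2n − 2 − 2k + 2N·Σ_{j=1}^k (p_{i_1}⋯p_{i_k})/p_{i_j}. In particular, for fixed n and k, this lower bound tends to infinity as min_j p_{i_j} → ∞. -/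
open Real

/-- Degree estimate for orbit types among the prime exponents of `Σ(p_1,…,p_{n−1},2,2)`:
for `J ⊆ {1,…,n−1}` with `k = |J| ≥ 2`, `P = Π_{j∈J} p_j` and return time `T = (π/2)P`,
the degree `μ(S_{NT}) − (1/2)·dim S_{NT} + (n−3)` (with `dim S_{NT} = 2k−4`) satisfies
`degree ≥ 2n − 2 − 2k + 2N·Σ_{j∈J} P/p_j`; in particular the lower bound tends to
infinity as the primes grow. -/
theorem stmt11 (n : ℕ) (hn : 3 ≤ n) (p : Fin (n - 1) → ℕ)
    (hp : ∀ i, Nat.Prime (p i) ∧ Odd (p i))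
    (J : Finset (Fin (n - 1))) (hJ : 2 ≤ J.card) :
    let k : ℕ := J.card
    let P : ℕ := ∏ j ∈ J, p j
    let μ : ℕ → ℝ := fun N =>
      2 * ∑ j ∈ J, (N * P : ℝ) / p j
      + 4 * (⌊(N * P : ℝ) / 2⌋ : ℝ)
      + 2 * ∑ i ∈ Jᶜ, (⌊(N * P : ℝ) / p i⌋ : ℝ)
      + ((n : ℝ) + 1 - k) - 2 * N * P
    let deg : ℕ → ℝ := fun N => μ N - ((k : ℝ) - 2) + ((n : ℝ) - 3)
    (∀ N : ℕ, 1 ≤ N →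
      deg N ≥ 2 * n - 2 - 2 * k + 2 * N * ∑ j ∈ J, (P : ℝ) / p j) ∧
    (∀ C : ℝ, ∃ M : ℕ, ∀ q : Fin (n - 1) → ℕ,
      (∀ i, Nat.Prime (q i) ∧ Odd (q i)) → (∀ j ∈ J, M ≤ q j) →
      ∀ N : ℕ, 1 ≤ N →
        2 * (n : ℝ) - 2 - 2 * k + 2 * N * ∑ j ∈ J, (∏ j' ∈ J, (q j' : ℝ)) / q j ≥ C) := by
  intro k P μ deg
  constructor
  · intro N hN
    simp only [deg, μ, ge_iff_le]
    -- rewrite the first sum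
    have hsum : ∑ j ∈ J, ((N : ℝ) * (P : ℝ)) / p j = (N : ℝ) * ∑ j ∈ J, (P : ℝ) / p j := by
      rw [Finset.mul_sum]
      exact Finset.sum_congr rfl fun j _ => by ring
    -- floor term bound: 4⌊NP/2⌋ ≥ 2NP − 2
    have hkey : ((N * P : ℕ) : ℤ) ≤ 2 * ⌊((N : ℝ) * (P : ℝ)) / 2⌋ + 1 := by
      have h1 : ((N : ℝ) * (P : ℝ)) / 2 < (⌊((N : ℝ) * (P : ℝ)) / 2⌋ : ℝ) + 1 :=
        Int.lt_floor_add_one _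
      have h2 : ((N * P : ℕ) : ℝ) < 2 * (⌊((N : ℝ) * (P : ℝ)) / 2⌋ : ℝ) + 2 := by
        push_cast
        linarith
      have h3 : ((N * P : ℕ) : ℤ) < 2 * ⌊((N : ℝ) * (P : ℝ)) / 2⌋ + 2 := by
        exact_mod_cast h2
      omega
    have hfloor2 : 2 * (N : ℝ) * (P : ℝ) - 2 ≤ 4 * (⌊((N : ℝ) * (P : ℝ)) / 2⌋ : ℝ) := by
      have : ((N * P : ℕ) : ℝ) ≤ 2 * (⌊((N : ℝ) * (P : ℝ)) / 2⌋ : ℝ) + 1 := by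
        exact_mod_cast hkey
      push_cast at this
      linarith
    -- complement floor sum is nonnegative
    have hfc : (0 : ℝ) ≤ ∑ i ∈ Jᶜ, (⌊((N : ℝ) * (P : ℝ)) / p i⌋ : ℝ) := by
      refine Finset.sum_nonneg fun i _ => ?_
      have : (0 : ℝ) ≤ ((N : ℝ) * (P : ℝ)) / p i :=
        div_nonneg (by positivity) (Nat.cast_nonneg _)
      exact_mod_cast Int.floor_nonneg.mpr this
    rw [hsum]
    linarith
  · intro C
    obtain ⟨M, hM⟩ := exists_nat_ge ((C + 2 * (k : ℝ) + 2) / 4)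
    refine ⟨M, fun q hq hqM N hN => ?_⟩
    have hk2 : 2 ≤ k := hJ
    -- each summand is at least M
    have hterm : ∀ j ∈ J, (M : ℝ) ≤ (∏ j' ∈ J, (q j' : ℝ)) / q j := by
      intro j hj
      have hqj : (0 : ℝ) < q j := by exact_mod_cast (hq j).1.pos
      have hprod : (∏ j' ∈ J, (q j' : ℝ)) / q j = ∏ j' ∈ J.erase j, (q j' : ℝ) := by
        rw [← Finset.prod_erase_mul J _ hj]
        field_simp
      rw [hprod]
      -- the erased set is nonempty since k ≥ 2
      have hcard : 1 ≤ (J.erase j).card := by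
        have := Finset.card_erase_of_mem hj
        omega
      obtain ⟨i, hi⟩ := Finset.card_pos.mp hcard
      have hle : q i ≤ ∏ j' ∈ J.erase j, q j' :=
        Finset.single_le_prod' (fun j' _ => (hq j').1.one_lt.le) hi
      have hMi : M ≤ ∏ j' ∈ J.erase j, q j' :=
        le_trans (hqM i (Finset.mem_of_mem_erase hi)) hle
      have : ((M : ℕ) : ℝ) ≤ ((∏ j' ∈ J.erase j, q j' : ℕ) : ℝ) := by exact_mod_cast hMi
      push_cast at this
      exact this
    have hsum : (k : ℝ) * M ≤ ∑ j ∈ J, (∏ j' ∈ J, (q j' : ℝ)) / q j := by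
      have := Finset.card_nsmul_le_sum J _ ((M : ℝ)) hterm
      simpa [nsmul_eq_mul] using this
    have hsum' : 2 * (M : ℝ) ≤ ∑ j ∈ J, (∏ j' ∈ J, (q j' : ℝ)) / q j := by
      have h2k : (2 : ℝ) ≤ (k : ℝ) := by exact_mod_cast hk2
      nlinarith [Nat.cast_nonneg (α := ℝ) M]
    have hsnn : (0 : ℝ) ≤ ∑ j ∈ J, (∏ j' ∈ J, (q j' : ℝ)) / q j := by
      have : (0 : ℝ) ≤ 2 * (M : ℝ) := by positivity
      linarith
    have hN1 : (1 : ℝ) ≤ (N : ℝ) := by exact_mod_cast hN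
    have hkn : (k : ℝ) ≤ (n : ℝ) - 1 := by
      have h1 : k ≤ n - 1 := by
        simpa using Finset.card_le_univ J
      have : (k : ℝ) ≤ ((n - 1 : ℕ) : ℝ) := by exact_mod_cast h1
      have h2 : ((n - 1 : ℕ) : ℝ) = (n : ℝ) - 1 := by
        have : 1 ≤ n := by omega
        push_cast [this]
        ring
      linarith [h2 ▸ this]
    have hNS : 2 * (M : ℝ) ≤ (N : ℝ) * ∑ j ∈ J, (∏ j' ∈ J, (q j' : ℝ)) / q j := by
      calc 2 * (M : ℝ) ≤ ∑ j ∈ J, (∏ j' ∈ J, (q j' : ℝ)) / q j := hsum'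
        _ = 1 * ∑ j ∈ J, (∏ j' ∈ J, (q j' : ℝ)) / q j := by ring
        _ ≤ (N : ℝ) * ∑ j ∈ J, (∏ j' ∈ J, (q j' : ℝ)) / q j :=
            mul_le_mul_of_nonneg_right hN1 hsnn
    have hknn : 0 ≤ 2 * (n : ℝ) - 2 - 2 * k := by linarith
    linarith
end

section
/- Let a_0,…,a_n be positive integers with min_j a_j ≥ 5n/2 and n ≥ 3. Then Σ_{j=0}^n 1/a_j < 1 (index negativity holds), and for every orbit type J ⊆ {0,…,n} with |J| ≥ 2, return time T = (π/2)·lcm_{j∈J} a_j, and every N ≥ 1, the degree μ(S_{NT}) − (1/2)dim S_{NT} + index + (n−3) is strictly less than −1 for every Morse index 0 ≤ index ≤ dim S_{NT} = 2|J| − 4. -/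
open Real

/-- If `min_j a_j ≥ 5n/2` and `n ≥ 3`, then `Σ_j 1/a_j < 1` (index negativity), and for
every orbit type `J` with `|J| ≥ 2`, return time `T = (π/2)·lcm_{j∈J} a_j`, every `N ≥ 1`
and every Morse index `0 ≤ idx ≤ dim S_{NT} = 2|J| − 4`, the Morse–Bott degree
`μ(S_{NT}) − (1/2)·dim S_{NT} + idx + (n−3)` is strictly less than `−1`. -/
theorem stmt12 (n : ℕ) (hn : 3 ≤ n) (a : Fin (n + 1) → ℕ)
    (ha : ∀ j, 0 < a j) (hbig : ∀ j, 5 * n ≤ 2 * a j) :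
    (∑ j, (1 : ℝ) / a j < 1) ∧
    ∀ J : Finset (Fin (n + 1)), 2 ≤ J.card →
      let T : ℝ := π / 2 * (J.lcm a : ℕ)
      let μ : ℕ → ℝ := fun N =>
        2 * ∑ j ∈ J, 2 * N * T / (π * a j)
        + 2 * ∑ j ∈ Jᶜ, (⌊2 * N * T / (π * a j)⌋ : ℝ)
        + (Jᶜ.card : ℝ) - 4 * N * T / π
      ∀ N : ℕ, 1 ≤ N → ∀ idx : ℕ, idx ≤ 2 * J.card - 4 →
        μ N - ((J.card : ℝ) - 2) + (idx : ℝ) + ((n : ℝ) - 3) < -1 := by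
  have hπ : (0:ℝ) < π := Real.pi_pos
  have hnR : (3:ℝ) ≤ (n:ℝ) := by exact_mod_cast hn
  have hterm : ∀ j : Fin (n+1), (1:ℝ) / a j ≤ 2 / (5*n) := by
    intro j
    rw [div_le_div_iff₀ (by exact_mod_cast ha j) (by positivity)]
    have := hbig j
    have : (5:ℝ) * n ≤ 2 * a j := by exact_mod_cast this
    linarith
  have hS : ∑ j, (1:ℝ) / a j ≤ (n+1) * (2 / (5*n)) := by
    calc ∑ j, (1:ℝ) / a j ≤ ∑ _j : Fin (n+1), 2 / (5*(n:ℝ)) :=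
          Finset.sum_le_sum (fun j _ => hterm j)
      _ = (n+1) * (2 / (5*n)) := by
          rw [Finset.sum_const, Finset.card_univ, Fintype.card_fin, nsmul_eq_mul]
          push_cast; ring
  have hS1 : ∑ j, (1:ℝ) / a j < 1 := by
    refine lt_of_le_of_lt hS ?_
    rw [mul_div_assoc', div_lt_one (by positivity)]
    nlinarith
  refine ⟨hS1, ?_⟩
  intro J hJ T μ N hN idx hidx
  set L : ℕ := J.lcm a with hLdef
  -- L is positive
  have hL0 : L ≠ 0 := by
    rw [hLdef, Ne, Finset.lcm_eq_zero_iff]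
    rintro ⟨j, _, hj⟩
    exact (ha j).ne' hj
  -- L ≥ a j0 for some j0 ∈ J, hence 5n ≤ 2L
  obtain ⟨j0, hj0⟩ := Finset.card_pos.mp (by omega : 0 < J.card)
  have hLbig : 5 * n ≤ 2 * L := by
    have hdvd : a j0 ∣ L := Finset.dvd_lcm hj0
    have := Nat.le_of_dvd (Nat.pos_of_ne_zero hL0) hdvd
    have := hbig j0
    omega
  set P : ℝ := (N:ℝ) * L with hPdef
  have hP : (5:ℝ) * n ≤ 2 * P := by
    have h1 : 5 * n ≤ 2 * (N * L) := by
      calc 5 * n ≤ 2 * L := hLbig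
        _ ≤ 2 * (N * L) := by nlinarith [Nat.pos_of_ne_zero hL0]
    calc (5:ℝ) * n ≤ 2 * ((N:ℝ) * L) := by exact_mod_cast h1
      _ = 2 * P := rfl
  have harg : ∀ j : Fin (n+1), 2 * (N:ℝ) * T / (π * a j) = (N:ℝ) * L / a j := by
    intro j
    have haj : ((a j : ℝ)) ≠ 0 := by exact_mod_cast (ha j).ne'
    show 2 * (N:ℝ) * (π / 2 * L) / (π * a j) = (N:ℝ) * L / a j
    field_simp
  have hlast : 4 * (N:ℝ) * T / π = 2 * P := by
    show 4 * (N:ℝ) * (π / 2 * L) / π = 2 * P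
    rw [hPdef]; field_simp; ring
  have hμ : μ N ≤ 2 * P * (∑ j, (1:ℝ)/a j) + (Jᶜ.card : ℝ) - 2 * P := by
    show 2 * ∑ j ∈ J, 2 * (N:ℝ) * T / (π * a j)
        + 2 * ∑ j ∈ Jᶜ, (⌊2 * (N:ℝ) * T / (π * a j)⌋ : ℝ)
        + (Jᶜ.card : ℝ) - 4 * N * T / π ≤ _
    rw [hlast]
    have e1 : ∑ j ∈ J, 2 * (N:ℝ) * T / (π * a j) = ∑ j ∈ J, P / a j :=
      Finset.sum_congr rfl (fun j _ => harg j)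
    have e2 : ∑ j ∈ Jᶜ, (⌊2 * (N:ℝ) * T / (π * a j)⌋ : ℝ) ≤ ∑ j ∈ Jᶜ, P / a j := by
      refine Finset.sum_le_sum (fun j _ => ?_)
      rw [harg j]
      exact Int.floor_le _
    have e3 : ∑ j ∈ J, P / a j + ∑ j ∈ Jᶜ, P / a j = P * ∑ j, (1:ℝ)/a j := by
      rw [Finset.sum_add_sum_compl, Finset.mul_sum]
      exact Finset.sum_congr rfl (fun j _ => by rw [mul_one_div])
    rw [e1]
    nlinarith [e2, e3]
  have hcardle : J.card ≤ n + 1 := le_trans (Finset.card_le_card (Finset.subset_univ J))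
    (by simp)
  have hcc : (Jᶜ.card : ℝ) = (n:ℝ) + 1 - J.card := by
    have : Jᶜ.card = (n + 1) - J.card := by
      rw [Finset.card_compl]; simp
    rw [this, Nat.cast_sub hcardle]; push_cast; ring
  have hidxR : (idx:ℝ) ≤ 2 * (J.card:ℝ) - 4 := by
    have h4 : 4 ≤ 2 * J.card := by omega
    have : (idx:ℝ) ≤ ((2 * J.card - 4 : ℕ) : ℝ) := by exact_mod_cast hidx
    rw [Nat.cast_sub h4] at this
    push_cast at this
    linarith
  have hkR : (2:ℝ) ≤ (J.card:ℝ) := by exact_mod_cast hJ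
  have hS' : 5 * (n:ℝ) * (∑ j, (1:ℝ)/a j) ≤ 2 * n + 2 := by
    have h5n : (0:ℝ) ≤ 5 * (n:ℝ) := by positivity
    have h := mul_le_mul_of_nonneg_left hS h5n
    have heq : 5*(n:ℝ)*(((n:ℝ)+1)*(2/(5*n))) = 2*n+2 := by
      have hn0 : (n:ℝ) ≠ 0 := by linarith
      field_simp
    linarith [heq ▸ h]
  set S : ℝ := ∑ j, (1:ℝ)/a j
  have key : 2 * P * S - 2 * P ≤ 2 - 3 * n := by
    have h1 : (0:ℝ) ≤ 2 * P - 5 * n := by linarith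
    have h2 : (0:ℝ) ≤ 5 * n - 5 * n * S := by linarith
    have h3 : (2 * P - 5 * n) * (5 * n - 5 * n * S) ≥ 0 := mul_nonneg h1 h2
    have hn0 : (0:ℝ) < n := by linarith
    nlinarith [mul_le_mul_of_nonneg_left hS' (le_of_lt hn0), h3]
  linarith [hμ, hcc, hidxR, key]
end

section
/- For the Brieskorn manifold Σ(2l,2,2,2) with l > 1, the cylindrical contact homology generators produced by the algorithm over one period (of length 2l + 2 in the grading) consist of: one generator in degree 2, two generators in each even degree 4, 6, …, 2l + 2, and one generator in degree 2l + 4. Equivalently, the generating degrees over all periods give exactly one generator in degree 2 and two generators in each even degree 2k with k ≥ 2; in particular no generators occur in degree −1, 0, or 1. -/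
private lemma unique_div (m a s q r : ℕ) (hs : s < m) (hr : r < m)
    (h : a * m + s = q * m + r) : a = q ∧ s = r := by
  have hm : 0 < m := by omega
  have e1 : (a * m + s) % m = s := by
    rw [mul_comm a m, Nat.mul_add_mod, Nat.mod_eq_of_lt hs]
  have e2 : (q * m + r) % m = r := by
    rw [mul_comm q m, Nat.mul_add_mod, Nat.mod_eq_of_lt hr]
  have e3 : (a * m + s) / m = a := by
    rw [mul_comm a m, Nat.mul_add_div hm, Nat.div_eq_of_lt hs]
    omega
  have e4 : (q * m + r) / m = q := by
    rw [mul_comm q m, Nat.mul_add_div hm, Nat.div_eq_of_lt hr]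
    omega
  rw [h] at e1 e3
  omega

private lemma T1_singleton (l q r : ℕ) (hl : 1 < l) (h1 : 1 ≤ r) (h2 : r < l) :
    {N : ℕ | 1 ≤ N ∧ ¬ l ∣ N ∧ N + N / l = q * (l + 1) + r} = {q * l + r} := by
  have hl0 : 0 < l := by omega
  ext N
  simp only [Set.mem_setOf_eq, Set.mem_singleton_iff]
  constructor
  · rintro ⟨hN, hdvd, heq⟩
    have hs1 : N % l ≠ 0 := fun h => hdvd (Nat.dvd_of_mod_eq_zero h)
    have hs2 : N % l < l := Nat.mod_lt _ hl0
    have hNd : l * (N / l) + N % l = N := Nat.div_add_mod N l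
    have e1 : (N / l) * (l + 1) = l * (N / l) + N / l := by ring
    have key : (N / l) * (l + 1) + N % l = q * (l + 1) + r := by omega
    obtain ⟨ha, hb⟩ := unique_div (l + 1) (N / l) (N % l) q r (by omega) (by omega) key
    rw [ha, hb] at hNd
    have e2 : l * q = q * l := Nat.mul_comm l q
    omega
  · rintro rfl
    have hdiv : (q * l + r) / l = q := by
      rw [mul_comm q l, Nat.mul_add_div hl0, Nat.div_eq_of_lt h2]
      omega
    refine ⟨by omega, ?_, ?_⟩
    · intro hdvd
      have hql : l ∣ q * l := dvd_mul_left l q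
      have hr' : l ∣ r := (Nat.dvd_add_right hql).mp hdvd
      have := Nat.le_of_dvd (by omega) hr'
      omega
    · rw [hdiv]; ring

private lemma T1_empty (l q r : ℕ) (hl : 1 < l) (hr : r = 0 ∨ r = l) :
    {N : ℕ | 1 ≤ N ∧ ¬ l ∣ N ∧ N + N / l = q * (l + 1) + r} = ∅ := by
  have hl0 : 0 < l := by omega
  rw [Set.eq_empty_iff_forall_notMem]
  rintro N ⟨hN, hdvd, heq⟩
  have hs1 : N % l ≠ 0 := fun h => hdvd (Nat.dvd_of_mod_eq_zero h)
  have hs2 : N % l < l := Nat.mod_lt _ hl0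
  have hNd : l * (N / l) + N % l = N := Nat.div_add_mod N l
  have e1 : (N / l) * (l + 1) = l * (N / l) + N / l := by ring
  have key : (N / l) * (l + 1) + N % l = q * (l + 1) + r := by omega
  obtain ⟨ha, hb⟩ := unique_div (l + 1) (N / l) (N % l) q r (by omega) (by omega) key
  omega

private lemma T2_singleton (l q : ℕ) (hl : 1 < l) (hq : 1 ≤ q) :
    {N : ℕ | 1 ≤ N ∧ N * (l + 1) = q * (l + 1)} = {q} := by
  ext N
  simp only [Set.mem_setOf_eq, Set.mem_singleton_iff]
  constructor
  · rintro ⟨h1, h2⟩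
    exact Nat.eq_of_mul_eq_mul_right (by omega) h2
  · rintro rfl; exact ⟨hq, rfl⟩

private lemma T2_empty (l q r : ℕ) (hl : 1 < l) (h1 : 1 ≤ r) (h2 : r < l + 1) :
    {N : ℕ | 1 ≤ N ∧ N * (l + 1) = q * (l + 1) + r} = ∅ := by
  rw [Set.eq_empty_iff_forall_notMem]
  rintro N ⟨hN, heq⟩
  obtain ⟨ha, hb⟩ := unique_div (l + 1) N 0 q r (by omega) h2 (by omega)
  omega

private lemma T2_zero (l : ℕ) : {N : ℕ | 1 ≤ N ∧ N * (l + 1) = 0} = ∅ := by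
  rw [Set.eq_empty_iff_forall_notMem]
  rintro N ⟨hN, heq⟩
  rcases Nat.mul_eq_zero.mp heq with h | h <;> omega

private lemma prodcard (A B : Set ℕ) (hA : A.Finite) (hB : B.Finite) (a b : ℕ) (hab : a ≠ b) :
    {q : ℕ × ℕ | (q.1 ∈ A ∧ q.2 = a) ∨ (q.1 ∈ B ∧ q.2 = b)}.ncard = A.ncard + B.ncard := by
  have key : ∀ (C : Set ℕ) (c0 : ℕ),
      {q : ℕ × ℕ | q.1 ∈ C ∧ q.2 = c0} = (fun x => (x, c0)) '' C := by
    intro C c0; ext ⟨x, y⟩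
    constructor
    · rintro ⟨h1, rfl⟩; exact ⟨x, h1, rfl⟩
    · rintro ⟨x', h1, h2⟩; cases h2; exact ⟨h1, rfl⟩
  have hinj : ∀ c0 : ℕ, Function.Injective (fun x : ℕ => (x, c0)) := by
    intro c0 x y h
    simpa using congrArg Prod.fst h
  have hsplit : {q : ℕ × ℕ | (q.1 ∈ A ∧ q.2 = a) ∨ (q.1 ∈ B ∧ q.2 = b)}
      = (fun x => (x, a)) '' A ∪ (fun x => (x, b)) '' B := by
    rw [← key A a, ← key B b]; rfl
  have hdisj : Disjoint ((fun x => (x, a)) '' A) ((fun x => (x, b)) '' B) := by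
    rw [Set.disjoint_left]
    rintro p ⟨x', hx', rfl⟩ ⟨x'', hx'', heq⟩
    exact hab (congrArg Prod.snd heq).symm
  rw [hsplit, Set.ncard_union_eq hdisj (hA.image _) (hB.image _),
    Set.ncard_image_of_injective _ (hinj a), Set.ncard_image_of_injective _ (hinj b)]

private noncomputable def cfun (l : ℕ) : ℤ → ℕ := fun d =>
  {q : ℕ × ℕ | 1 ≤ q.1 ∧ ¬ l ∣ q.1 ∧ (q.2 = 0 ∨ q.2 = 2) ∧
    d = 2 * (q.1 : ℤ) + 2 * ((q.1 / l : ℕ) : ℤ) + (q.2 : ℤ)}.ncard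
  + {q : ℕ × ℕ | 1 ≤ q.1 ∧ (q.2 = 0 ∨ q.2 = 4) ∧
    d = 2 * (q.1 : ℤ) * (l + 1) - 2 + (q.2 : ℤ)}.ncard
  + 2 * {N : ℕ | 1 ≤ N ∧ d = 2 * (N : ℤ) * (l + 1)}.ncard

private lemma bridge1 (l kn : ℕ) (hk : 1 ≤ kn) :
    {q : ℕ × ℕ | 1 ≤ q.1 ∧ ¬ l ∣ q.1 ∧ (q.2 = 0 ∨ q.2 = 2) ∧
      2 * (kn : ℤ) = 2 * (q.1 : ℤ) + 2 * ((q.1 / l : ℕ) : ℤ) + (q.2 : ℤ)}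
    = {q : ℕ × ℕ | (q.1 ∈ {N : ℕ | 1 ≤ N ∧ ¬ l ∣ N ∧ N + N / l = kn} ∧ q.2 = 0) ∨
      (q.1 ∈ {N : ℕ | 1 ≤ N ∧ ¬ l ∣ N ∧ N + N / l = kn - 1} ∧ q.2 = 2)} := by
  ext ⟨N, j⟩
  simp only [Set.mem_setOf_eq]
  constructor
  · rintro ⟨h1, h2, (rfl | rfl), h4⟩
    · left; refine ⟨⟨h1, h2, ?_⟩, rfl⟩
      generalize N / l = t at h4
      push_cast at h4
      omega
    · right; refine ⟨⟨h1, h2, ?_⟩, rfl⟩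
      generalize N / l = t at h4
      push_cast at h4
      omega
  · rintro (⟨⟨h1, h2, h3⟩, rfl⟩ | ⟨⟨h1, h2, h3⟩, rfl⟩)
    · refine ⟨h1, h2, Or.inl rfl, ?_⟩
      generalize N / l = t at h3 ⊢
      push_cast
      omega
    · refine ⟨h1, h2, Or.inr rfl, ?_⟩
      generalize N / l = t at h3 ⊢
      push_cast
      omega

private lemma bridge2 (l kn : ℕ) (hk : 1 ≤ kn) :
    {q : ℕ × ℕ | 1 ≤ q.1 ∧ (q.2 = 0 ∨ q.2 = 4) ∧
      2 * (kn : ℤ) = 2 * (q.1 : ℤ) * ((l : ℤ) + 1) - 2 + (q.2 : ℤ)}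
    = {q : ℕ × ℕ | (q.1 ∈ {N : ℕ | 1 ≤ N ∧ N * (l + 1) = kn + 1} ∧ q.2 = 0) ∨
      (q.1 ∈ {N : ℕ | 1 ≤ N ∧ N * (l + 1) = kn - 1} ∧ q.2 = 4)} := by
  ext ⟨N, j⟩
  simp only [Set.mem_setOf_eq]
  constructor
  · rintro ⟨h1, (rfl | rfl), h4⟩
    · left; refine ⟨⟨h1, ?_⟩, rfl⟩
      have h4' : 2 * (kn : ℤ) = 2 * ((N * (l + 1) : ℕ) : ℤ) - 2 := by
        push_cast at h4 ⊢; linarith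
      have : ((N * (l + 1) : ℕ) : ℤ) = (kn : ℤ) + 1 := by linarith
      exact_mod_cast this
    · right; refine ⟨⟨h1, ?_⟩, rfl⟩
      have h4' : 2 * (kn : ℤ) = 2 * ((N * (l + 1) : ℕ) : ℤ) + 2 := by
        push_cast at h4 ⊢; linarith
      have : ((N * (l + 1) : ℕ) : ℤ) = (kn : ℤ) - 1 := by linarith
      have h5 : N * (l + 1) + 1 = kn := by
        have h6 : ((N * (l + 1) + 1 : ℕ) : ℤ) = (kn : ℤ) := by push_cast at this ⊢; linarith
        exact_mod_cast h6
      omega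
  · rintro (⟨⟨h1, h3⟩, rfl⟩ | ⟨⟨h1, h3⟩, rfl⟩)
    · refine ⟨h1, Or.inl rfl, ?_⟩
      have h6 : ((N * (l + 1) : ℕ) : ℤ) = (kn : ℤ) + 1 := by exact_mod_cast congrArg (Nat.cast : ℕ → ℤ) h3
      push_cast at h6 ⊢
      linarith
    · refine ⟨h1, Or.inr rfl, ?_⟩
      have h5 : N * (l + 1) + 1 = kn := by omega
      have h6 : ((N * (l + 1) + 1 : ℕ) : ℤ) = (kn : ℤ) := by exact_mod_cast congrArg (Nat.cast : ℕ → ℤ) h5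
      push_cast at h6 ⊢
      linarith

private lemma bridge3 (l kn : ℕ) :
    {N : ℕ | 1 ≤ N ∧ 2 * (kn : ℤ) = 2 * (N : ℤ) * ((l : ℤ) + 1)}
    = {N : ℕ | 1 ≤ N ∧ N * (l + 1) = kn} := by
  ext N
  simp only [Set.mem_setOf_eq]
  constructor
  · rintro ⟨h1, h2⟩
    refine ⟨h1, ?_⟩
    have h6 : ((N * (l + 1) : ℕ) : ℤ) = (kn : ℤ) := by push_cast at h2 ⊢; linarith
    exact_mod_cast h6
  · rintro ⟨h1, h2⟩
    refine ⟨h1, ?_⟩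
    have h6 : ((N * (l + 1) : ℕ) : ℤ) = (kn : ℤ) := by exact_mod_cast congrArg (Nat.cast : ℕ → ℤ) h2
    push_cast at h6 ⊢
    linarith

private lemma cfun_eval (l kn : ℕ) (hl : 1 < l) (hk : 1 ≤ kn) :
    cfun l (2 * (kn : ℤ)) = if kn = 1 then 1 else 2 := by
  obtain ⟨q, r, hr, hkn⟩ : ∃ q r, r < l + 1 ∧ kn = q * (l + 1) + r :=
    ⟨kn / (l + 1), kn % (l + 1), Nat.mod_lt _ (by omega), (Nat.div_add_mod' kn (l + 1)).symm⟩
  simp only [cfun]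
  rw [bridge1 l kn hk, bridge2 l kn hk, bridge3 l kn]
  rcases (by omega : (q = 0 ∧ r = 1) ∨ r = 0 ∨ (1 ≤ q ∧ r = 1) ∨ (2 ≤ r ∧ r < l) ∨ r = l)
    with ⟨hq, hr1⟩ | hr0 | ⟨hq, hr1⟩ | ⟨hr2, hrl⟩ | hrl
  · -- kn = 1
    subst hq; subst hr1
    have s1 : {N : ℕ | 1 ≤ N ∧ ¬ l ∣ N ∧ N + N / l = kn} = {0 * l + 1} := by
      rw [show kn = 0 * (l + 1) + 1 from hkn]
      exact T1_singleton l 0 1 hl le_rfl (by omega)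
    have s2 : {N : ℕ | 1 ≤ N ∧ ¬ l ∣ N ∧ N + N / l = kn - 1} = ∅ := by
      rw [show kn - 1 = 0 * (l + 1) + 0 from by omega]
      exact T1_empty l 0 0 hl (Or.inl rfl)
    have s3 : {N : ℕ | 1 ≤ N ∧ N * (l + 1) = kn + 1} = ∅ := by
      rw [show kn + 1 = 0 * (l + 1) + 2 from by omega]
      exact T2_empty l 0 2 hl (by omega) (by omega)
    have s4 : {N : ℕ | 1 ≤ N ∧ N * (l + 1) = kn - 1} = ∅ := by
      rw [show kn - 1 = 0 from by omega]
      exact T2_zero l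
    have s5 : {N : ℕ | 1 ≤ N ∧ N * (l + 1) = kn} = ∅ := by
      rw [show kn = 0 * (l + 1) + 1 from hkn]
      exact T2_empty l 0 1 hl le_rfl (by omega)
    rw [s1, s2, s3, s4, s5,
      prodcard _ _ (Set.finite_singleton _) Set.finite_empty 0 2 (by norm_num),
      prodcard _ _ Set.finite_empty Set.finite_empty 0 4 (by norm_num),
      if_pos (by omega : kn = 1)]
    simp
  · -- r = 0
    subst hr0
    rcases q with _ | q'
    · omega
    have e : (q' + 1) * (l + 1) = q' * (l + 1) + (l + 1) := by ring
    have s1 : {N : ℕ | 1 ≤ N ∧ ¬ l ∣ N ∧ N + N / l = kn} = ∅ := by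
      rw [show kn = (q' + 1) * (l + 1) + 0 from hkn]
      exact T1_empty l (q' + 1) 0 hl (Or.inl rfl)
    have s2 : {N : ℕ | 1 ≤ N ∧ ¬ l ∣ N ∧ N + N / l = kn - 1} = ∅ := by
      rw [show kn - 1 = q' * (l + 1) + l from by omega]
      exact T1_empty l q' l hl (Or.inr rfl)
    have s3 : {N : ℕ | 1 ≤ N ∧ N * (l + 1) = kn + 1} = ∅ := by
      rw [show kn + 1 = (q' + 1) * (l + 1) + 1 from by omega]
      exact T2_empty l (q' + 1) 1 hl le_rfl (by omega)
    have s4 : {N : ℕ | 1 ≤ N ∧ N * (l + 1) = kn - 1} = ∅ := by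
      rw [show kn - 1 = q' * (l + 1) + l from by omega]
      exact T2_empty l q' l hl (by omega) (by omega)
    have s5 : {N : ℕ | 1 ≤ N ∧ N * (l + 1) = kn} = {q' + 1} := by
      rw [show kn = (q' + 1) * (l + 1) from by omega]
      exact T2_singleton l (q' + 1) hl (by omega)
    have hne : kn ≠ 1 := by
      have := Nat.le_mul_of_pos_left (l + 1) (show 0 < q' + 1 by omega)
      omega
    rw [s1, s2, s3, s4, s5,
      prodcard _ _ Set.finite_empty Set.finite_empty 0 2 (by norm_num),
      prodcard _ _ Set.finite_empty Set.finite_empty 0 4 (by norm_num),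
      if_neg hne]
    simp
  · -- r = 1, 1 ≤ q
    subst hr1
    have s1 : {N : ℕ | 1 ≤ N ∧ ¬ l ∣ N ∧ N + N / l = kn} = {q * l + 1} := by
      rw [show kn = q * (l + 1) + 1 from hkn]
      exact T1_singleton l q 1 hl le_rfl (by omega)
    have s2 : {N : ℕ | 1 ≤ N ∧ ¬ l ∣ N ∧ N + N / l = kn - 1} = ∅ := by
      rw [show kn - 1 = q * (l + 1) + 0 from by omega]
      exact T1_empty l q 0 hl (Or.inl rfl)
    have s3 : {N : ℕ | 1 ≤ N ∧ N * (l + 1) = kn + 1} = ∅ := by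
      rw [show kn + 1 = q * (l + 1) + 2 from by omega]
      exact T2_empty l q 2 hl (by omega) (by omega)
    have s4 : {N : ℕ | 1 ≤ N ∧ N * (l + 1) = kn - 1} = {q} := by
      rw [show kn - 1 = q * (l + 1) from by omega]
      exact T2_singleton l q hl hq
    have s5 : {N : ℕ | 1 ≤ N ∧ N * (l + 1) = kn} = ∅ := by
      rw [show kn = q * (l + 1) + 1 from hkn]
      exact T2_empty l q 1 hl le_rfl (by omega)
    have hne : kn ≠ 1 := by
      have := Nat.le_mul_of_pos_left (l + 1) (show 0 < q by omega)
      omega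
    rw [s1, s2, s3, s4, s5,
      prodcard _ _ (Set.finite_singleton _) Set.finite_empty 0 2 (by norm_num),
      prodcard _ _ Set.finite_empty (Set.finite_singleton _) 0 4 (by norm_num),
      if_neg hne]
    simp
  · -- 2 ≤ r < l
    have s1 : {N : ℕ | 1 ≤ N ∧ ¬ l ∣ N ∧ N + N / l = kn} = {q * l + r} := by
      rw [hkn]
      exact T1_singleton l q r hl (by omega) hrl
    have s2 : {N : ℕ | 1 ≤ N ∧ ¬ l ∣ N ∧ N + N / l = kn - 1} = {q * l + (r - 1)} := by
      rw [show kn - 1 = q * (l + 1) + (r - 1) from by omega]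
      exact T1_singleton l q (r - 1) hl (by omega) (by omega)
    have s3 : {N : ℕ | 1 ≤ N ∧ N * (l + 1) = kn + 1} = ∅ := by
      rw [show kn + 1 = q * (l + 1) + (r + 1) from by omega]
      exact T2_empty l q (r + 1) hl (by omega) (by omega)
    have s4 : {N : ℕ | 1 ≤ N ∧ N * (l + 1) = kn - 1} = ∅ := by
      rw [show kn - 1 = q * (l + 1) + (r - 1) from by omega]
      exact T2_empty l q (r - 1) hl (by omega) (by omega)
    have s5 : {N : ℕ | 1 ≤ N ∧ N * (l + 1) = kn} = ∅ := by
      rw [hkn]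
      exact T2_empty l q r hl (by omega) (by omega)
    rw [s1, s2, s3, s4, s5,
      prodcard _ _ (Set.finite_singleton _) (Set.finite_singleton _) 0 2 (by norm_num),
      prodcard _ _ Set.finite_empty Set.finite_empty 0 4 (by norm_num),
      if_neg (by omega : kn ≠ 1)]
    simp
  · -- r = l
    have e : (q + 1) * (l + 1) = q * (l + 1) + (l + 1) := by ring
    have s1 : {N : ℕ | 1 ≤ N ∧ ¬ l ∣ N ∧ N + N / l = kn} = ∅ := by
      rw [show kn = q * (l + 1) + l from by omega]
      exact T1_empty l q l hl (Or.inr rfl)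
    have s2 : {N : ℕ | 1 ≤ N ∧ ¬ l ∣ N ∧ N + N / l = kn - 1} = {q * l + (l - 1)} := by
      rw [show kn - 1 = q * (l + 1) + (l - 1) from by omega]
      exact T1_singleton l q (l - 1) hl (by omega) (by omega)
    have s3 : {N : ℕ | 1 ≤ N ∧ N * (l + 1) = kn + 1} = {q + 1} := by
      rw [show kn + 1 = (q + 1) * (l + 1) from by omega]
      exact T2_singleton l (q + 1) hl (by omega)
    have s4 : {N : ℕ | 1 ≤ N ∧ N * (l + 1) = kn - 1} = ∅ := by
      rw [show kn - 1 = q * (l + 1) + (l - 1) from by omega]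
      exact T2_empty l q (l - 1) hl (by omega) (by omega)
    have s5 : {N : ℕ | 1 ≤ N ∧ N * (l + 1) = kn} = ∅ := by
      rw [show kn = q * (l + 1) + l from by omega]
      exact T2_empty l q l hl (by omega) (by omega)
    rw [s1, s2, s3, s4, s5,
      prodcard _ _ Set.finite_empty (Set.finite_singleton _) 0 2 (by norm_num),
      prodcard _ _ (Set.finite_singleton _) Set.finite_empty 0 4 (by norm_num),
      if_neg (by omega : kn ≠ 1)]
    simp

private lemma cfun_zero (l : ℕ) (hl : 1 < l) (d : ℤ) (hd2 : d ≠ 2)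
    (h : ∀ k : ℤ, 2 ≤ k → d ≠ 2 * k) : cfun l d = 0 := by
  have key : ∀ m : ℕ, 1 ≤ m → d ≠ 2 * (m : ℤ) := by
    intro m hm
    rcases eq_or_ne m 1 with rfl | hm1
    · simpa using hd2
    · exact h (m : ℤ) (by exact_mod_cast (show 2 ≤ m by omega))
  have e1 : {q : ℕ × ℕ | 1 ≤ q.1 ∧ ¬ l ∣ q.1 ∧ (q.2 = 0 ∨ q.2 = 2) ∧
      d = 2 * (q.1 : ℤ) + 2 * ((q.1 / l : ℕ) : ℤ) + (q.2 : ℤ)} = ∅ := by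
    rw [Set.eq_empty_iff_forall_notMem]
    rintro ⟨N, j⟩ hmem
    simp only [Set.mem_setOf_eq] at hmem
    obtain ⟨h1, h2, (rfl | rfl), h4⟩ := hmem
    · refine key (N + N / l) (le_trans h1 (Nat.le_add_right N (N / l))) ?_
      generalize N / l = t at h4 ⊢
      push_cast at h4 ⊢
      omega
    · refine key (N + N / l + 1) (Nat.succ_le_succ (Nat.zero_le _)) ?_
      generalize N / l = t at h4 ⊢
      push_cast at h4 ⊢
      omega
  have e2 : {q : ℕ × ℕ | 1 ≤ q.1 ∧ (q.2 = 0 ∨ q.2 = 4) ∧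
      d = 2 * (q.1 : ℤ) * ((l : ℤ) + 1) - 2 + (q.2 : ℤ)} = ∅ := by
    rw [Set.eq_empty_iff_forall_notMem]
    rintro ⟨N, j⟩ hmem
    simp only [Set.mem_setOf_eq] at hmem
    obtain ⟨h1, (rfl | rfl), h4⟩ := hmem
    · have hM : l + 1 ≤ N * (l + 1) := Nat.le_mul_of_pos_left (l + 1) (by omega)
      refine key (N * (l + 1) - 1) (by omega) ?_
      rw [Nat.cast_sub (by omega : 1 ≤ N * (l + 1))]
      push_cast at h4 ⊢
      linarith
    · have hM : l + 1 ≤ N * (l + 1) := Nat.le_mul_of_pos_left (l + 1) (by omega)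
      refine key (N * (l + 1) + 1) (by omega) ?_
      push_cast at h4 ⊢
      linarith
  have e3 : {N : ℕ | 1 ≤ N ∧ d = 2 * (N : ℤ) * ((l : ℤ) + 1)} = ∅ := by
    rw [Set.eq_empty_iff_forall_notMem]
    rintro N ⟨h1, h4⟩
    have hM : l + 1 ≤ N * (l + 1) := Nat.le_mul_of_pos_left (l + 1) (by omega)
    refine key (N * (l + 1)) (by omega) ?_
    push_cast at h4 ⊢
    linarith
  simp only [cfun, e1, e2, e3, Set.ncard_empty]

/-- For `Σ(2l,2,2,2)` with `l > 1` (here `n = 3`), the generator-count function of the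
cylindrical contact homology produced by the algorithm:
the orbit spaces `S_{NT₁}` (`N ≥ 1`, `l ∤ N`) contribute one generator in each degree
`2N + 2⌊N/l⌋ + j` for `j ∈ {0,2}`, and the principal orbit spaces `S_{NT₂}` (`N ≥ 1`)
contribute generators in degrees `2N(l+1) − 2 + j` with multiplicity `1,2,1` for
`j = 0,2,4`.  The resulting multiset of degrees is: one generator in degree `2` and two
generators in each even degree `2k`, `k ≥ 2`; in particular none in degree `−1, 0, 1`. -/
theorem stmt14 (l : ℕ) (hl : 1 < l) :
    let c : ℤ → ℕ := fun d =>
      {q : ℕ × ℕ | 1 ≤ q.1 ∧ ¬ l ∣ q.1 ∧ (q.2 = 0 ∨ q.2 = 2) ∧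
        d = 2 * (q.1 : ℤ) + 2 * ((q.1 / l : ℕ) : ℤ) + (q.2 : ℤ)}.ncard
      + {q : ℕ × ℕ | 1 ≤ q.1 ∧ (q.2 = 0 ∨ q.2 = 4) ∧
        d = 2 * (q.1 : ℤ) * (l + 1) - 2 + (q.2 : ℤ)}.ncard
      + 2 * {N : ℕ | 1 ≤ N ∧ d = 2 * (N : ℤ) * (l + 1)}.ncard
    (c 2 = 1) ∧
    (∀ k : ℤ, 2 ≤ k → c (2 * k) = 2) ∧
    (∀ d : ℤ, d ≠ 2 → (∀ k : ℤ, 2 ≤ k → d ≠ 2 * k) → c d = 0) := by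
  intro c
  refine ⟨?_, ?_, ?_⟩
  · show cfun l 2 = 1
    have h := cfun_eval l 1 hl le_rfl
    norm_num at h
    exact h
  · intro k hk
    obtain ⟨kn, rfl⟩ : ∃ n : ℕ, ((n : ℕ) : ℤ) = k := ⟨k.toNat, Int.toNat_of_nonneg (by omega)⟩
    show cfun l (2 * (kn : ℤ)) = 2
    have hkn : 2 ≤ kn := by exact_mod_cast hk
    have h := cfun_eval l kn hl (by omega)
    rw [if_neg (by omega : kn ≠ 1)] at h
    exact h
  · intro d hd2 hnd
    show cfun l d = 0
    exact cfun_zero l hl d hd2 hnd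
end

section
/- For the Brieskorn manifold Σ(k,k,k,k) with k ≥ 7, the degrees of the contact homology generators produced by the algorithm are: one generator in degree 2N(4−k) − 2, d = ((k−1)^4 − 1)/k + 2 generators in degree 2N(4−k), and one generator in degree 2N(4−k) + 2, for each N = 1, 2, …. In particular, all degrees are ≤ 2(4−k) + 2 ≤ −4 < −1, so the cylindrical contact homology is well defined. -/
/-- A product `(4-k)*x` (with `k ≥ 7`) cannot equal half of a small nonzero even number. -/
lemma stmt15_no_small (a x y : ℤ) (ha : a ≤ -3) (h : 2 * (a * x) = y)
    (h1 : y ≠ 0) (h2 : -4 ≤ y) (h3 : y ≤ 4) : False := by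
  rcases lt_trichotomy x 0 with hx | hx | hx
  · have := mul_le_mul_of_nonpos_left (show x ≤ -1 by omega) (show a ≤ 0 by omega)
    -- a * (-1) ≤ a * x
    linarith
  · subst hx; simp at h; omega
  · have := mul_le_mul_of_nonpos_left (show (1 : ℤ) ≤ x by omega) (show a ≤ 0 by omega)
    -- a * x ≤ a * 1
    linarith

lemma stmt15_empty_of (k N e f : ℤ) (hk : 7 ≤ k)
    (hd : f - e = 2 ∨ f - e = -2 ∨ f - e = 4 ∨ f - e = -4)
    (M : ℤ) (h : 2 * N * (4 - k) + e = 2 * M * (4 - k) + f) : False := by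
  have h2 : 2 * ((4 - k) * (N - M)) = f - e := by linear_combination h
  exact stmt15_no_small (4 - k) (N - M) (f - e) (by omega) h2 (by omega) (by omega) (by omega)

lemma stmt15_single_of (k N M : ℤ) (hk : 7 ≤ k)
    (h : 2 * N * (4 - k) = 2 * M * (4 - k)) : M = N := by
  have h2 : 2 * ((4 - k) * (N - M)) = 0 := by linear_combination h
  have h3 : (4 - k) * (N - M) = 0 := by omega
  rcases mul_eq_zero.mp h3 with h4 | h4 <;> omega

/-- For `Σ(k,k,k,k)` with `k ≥ 7`, the algorithm yields, for each `N ≥ 1`, one generator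
in degree `2N(4−k) − 2`, `d = ((k−1)^4 − 1)/k + 2` generators in degree `2N(4−k)`, and
one generator in degree `2N(4−k) + 2`.  All these degrees are `≤ 2(4−k) + 2 ≤ −4 < −1`,
so cylindrical contact homology is well defined. -/
theorem stmt15 (k : ℤ) (hk : 7 ≤ k) :
    let d : ℤ := ((k - 1) ^ 4 - 1) / k + 2
    let c : ℤ → ℤ := fun deg =>
      ({N : ℤ | 1 ≤ N ∧ deg = 2 * N * (4 - k) - 2}.ncard : ℤ)
      + d * ({N : ℤ | 1 ≤ N ∧ deg = 2 * N * (4 - k)}.ncard : ℤ)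
      + ({N : ℤ | 1 ≤ N ∧ deg = 2 * N * (4 - k) + 2}.ncard : ℤ)
    (∀ N : ℤ, 1 ≤ N →
      c (2 * N * (4 - k) - 2) = 1 ∧ c (2 * N * (4 - k)) = d ∧
      c (2 * N * (4 - k) + 2) = 1) ∧
    (∀ N : ℤ, 1 ≤ N → 2 * N * (4 - k) + 2 ≤ 2 * (4 - k) + 2) ∧
    (2 * (4 - k) + 2 ≤ -4) ∧ (-4 : ℤ) < -1 ∧
    (∀ deg : ℤ, 0 < c deg → deg ≤ -4) := by
  intro d c
  refine ⟨?_, ?_, by omega, by norm_num, ?_⟩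
  · intro N hN
    -- the nine set computations
    have hA1 : {M : ℤ | 1 ≤ M ∧ 2 * N * (4 - k) - 2 = 2 * M * (4 - k) - 2} = {N} := by
      ext M
      simp only [Set.mem_setOf_eq, Set.mem_singleton_iff]
      constructor
      · rintro ⟨hM, h⟩; exact stmt15_single_of k N M hk (by linarith)
      · rintro rfl; exact ⟨hN, rfl⟩
    have hA2 : {M : ℤ | 1 ≤ M ∧ 2 * N * (4 - k) - 2 = 2 * M * (4 - k)} = ∅ := by
      ext M
      simp only [Set.mem_setOf_eq, Set.mem_empty_iff_false, iff_false, not_and]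
      intro _ h
      exact stmt15_empty_of k N (-2) 0 hk (by norm_num) M (by linarith)
    have hA3 : {M : ℤ | 1 ≤ M ∧ 2 * N * (4 - k) - 2 = 2 * M * (4 - k) + 2} = ∅ := by
      ext M
      simp only [Set.mem_setOf_eq, Set.mem_empty_iff_false, iff_false, not_and]
      intro _ h
      exact stmt15_empty_of k N (-2) 2 hk (by norm_num) M (by linarith)
    have hB1 : {M : ℤ | 1 ≤ M ∧ 2 * N * (4 - k) = 2 * M * (4 - k) - 2} = ∅ := by
      ext M
      simp only [Set.mem_setOf_eq, Set.mem_empty_iff_false, iff_false, not_and]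
      intro _ h
      exact stmt15_empty_of k N 0 (-2) hk (by norm_num) M (by linarith)
    have hB2 : {M : ℤ | 1 ≤ M ∧ 2 * N * (4 - k) = 2 * M * (4 - k)} = {N} := by
      ext M
      simp only [Set.mem_setOf_eq, Set.mem_singleton_iff]
      constructor
      · rintro ⟨hM, h⟩; exact stmt15_single_of k N M hk (by linarith)
      · rintro rfl; exact ⟨hN, rfl⟩
    have hB3 : {M : ℤ | 1 ≤ M ∧ 2 * N * (4 - k) = 2 * M * (4 - k) + 2} = ∅ := by
      ext M
      simp only [Set.mem_setOf_eq, Set.mem_empty_iff_false, iff_false, not_and]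
      intro _ h
      exact stmt15_empty_of k N 0 2 hk (by norm_num) M (by linarith)
    have hC1 : {M : ℤ | 1 ≤ M ∧ 2 * N * (4 - k) + 2 = 2 * M * (4 - k) - 2} = ∅ := by
      ext M
      simp only [Set.mem_setOf_eq, Set.mem_empty_iff_false, iff_false, not_and]
      intro _ h
      exact stmt15_empty_of k N 2 (-2) hk (by norm_num) M (by linarith)
    have hC2 : {M : ℤ | 1 ≤ M ∧ 2 * N * (4 - k) + 2 = 2 * M * (4 - k)} = ∅ := by
      ext M
      simp only [Set.mem_setOf_eq, Set.mem_empty_iff_false, iff_false, not_and]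
      intro _ h
      exact stmt15_empty_of k N 2 0 hk (by norm_num) M (by linarith)
    have hC3 : {M : ℤ | 1 ≤ M ∧ 2 * N * (4 - k) + 2 = 2 * M * (4 - k) + 2} = {N} := by
      ext M
      simp only [Set.mem_setOf_eq, Set.mem_singleton_iff]
      constructor
      · rintro ⟨hM, h⟩; exact stmt15_single_of k N M hk (by linarith)
      · rintro rfl; exact ⟨hN, rfl⟩
    refine ⟨?_, ?_, ?_⟩
    · show (({M : ℤ | 1 ≤ M ∧ 2 * N * (4 - k) - 2 = 2 * M * (4 - k) - 2}.ncard : ℤ)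
        + d * ({M : ℤ | 1 ≤ M ∧ 2 * N * (4 - k) - 2 = 2 * M * (4 - k)}.ncard : ℤ)
        + ({M : ℤ | 1 ≤ M ∧ 2 * N * (4 - k) - 2 = 2 * M * (4 - k) + 2}.ncard : ℤ)) = 1
      rw [hA1, hA2, hA3]
      simp
    · show (({M : ℤ | 1 ≤ M ∧ 2 * N * (4 - k) = 2 * M * (4 - k) - 2}.ncard : ℤ)
        + d * ({M : ℤ | 1 ≤ M ∧ 2 * N * (4 - k) = 2 * M * (4 - k)}.ncard : ℤ)
        + ({M : ℤ | 1 ≤ M ∧ 2 * N * (4 - k) = 2 * M * (4 - k) + 2}.ncard : ℤ)) = d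
      rw [hB1, hB2, hB3]
      simp
    · show (({M : ℤ | 1 ≤ M ∧ 2 * N * (4 - k) + 2 = 2 * M * (4 - k) - 2}.ncard : ℤ)
        + d * ({M : ℤ | 1 ≤ M ∧ 2 * N * (4 - k) + 2 = 2 * M * (4 - k)}.ncard : ℤ)
        + ({M : ℤ | 1 ≤ M ∧ 2 * N * (4 - k) + 2 = 2 * M * (4 - k) + 2}.ncard : ℤ)) = 1
      rw [hC1, hC2, hC3]
      simp
  · intro N hN
    have h := mul_nonneg (show (0 : ℤ) ≤ N - 1 by omega) (show (0 : ℤ) ≤ k - 4 by omega)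
    nlinarith
  · intro deg hpos
    by_contra hdeg
    push_neg at hdeg
    have e1 : {M : ℤ | 1 ≤ M ∧ deg = 2 * M * (4 - k) - 2} = ∅ := by
      ext M
      simp only [Set.mem_setOf_eq, Set.mem_empty_iff_false, iff_false, not_and]
      intro hM h
      have := mul_nonneg (show (0 : ℤ) ≤ M - 1 by omega) (show (0 : ℤ) ≤ k - 4 by omega)
      nlinarith
    have e2 : {M : ℤ | 1 ≤ M ∧ deg = 2 * M * (4 - k)} = ∅ := by
      ext M
      simp only [Set.mem_setOf_eq, Set.mem_empty_iff_false, iff_false, not_and]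
      intro hM h
      have := mul_nonneg (show (0 : ℤ) ≤ M - 1 by omega) (show (0 : ℤ) ≤ k - 4 by omega)
      nlinarith
    have e3 : {M : ℤ | 1 ≤ M ∧ deg = 2 * M * (4 - k) + 2} = ∅ := by
      ext M
      simp only [Set.mem_setOf_eq, Set.mem_empty_iff_false, iff_false, not_and]
      intro hM h
      have := mul_nonneg (show (0 : ℤ) ≤ M - 1 by omega) (show (0 : ℤ) ≤ k - 4 by omega)
      nlinarith
    have : c deg = 0 := by
      show (({M : ℤ | 1 ≤ M ∧ deg = 2 * M * (4 - k) - 2}.ncard : ℤ)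
        + d * ({M : ℤ | 1 ≤ M ∧ deg = 2 * M * (4 - k)}.ncard : ℤ)
        + ({M : ℤ | 1 ≤ M ∧ deg = 2 * M * (4 - k) + 2}.ncard : ℤ)) = 0
      rw [e1, e2, e3]
      simp
    omega
end
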